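/- Let N ≥ 1, let ω1, ω2 be nonzero complex numbers with Im(ω1/ω2) > 0 and Re(ω1/ω2) > 0, and let g, g_0,…,g_4 ∈ ℂ with ℬ = (2N−2)g + Σ_{n=0}^4 g_n. Define 𝒩(g_0,…,g_4) = (−2)^N N! (q̃;q̃)_∞^N/(q;q)_∞^N · ∏_{j=1}^N [S(g;ω)/S(jg;ω)] · [∏_{n=0}^4 S((1−j)g + ℬ − g_n;ω)] / [∏_{0 ≤ n < m ≤ 4} S((j−1)g + g_n + g_m;ω)], and set t = e^{2πi g/ω2}, t_n = e^{2πi g_n/ω2}, B = e^{2πi ℬ/ω2}, q = e^{2πi ω1/ω2}. Then, whenever all double sine values involved are defined and nonzero, 𝒩(g_0, g_1, g_2, g_3, g_4) / 𝒩(g_0 + ω1/2, g_1 + ω1/2, g_2 + ω1/2, g_3 − ω1/2, g_4 − ω1/2) = ρ̃ / ρ, where ρ = ∏_{j=1}^N (1 − t^{j−1} t_0 t_1)(1 − t^{j−1} t_0 t_2)(1 − t^{j−1} t_1 t_2) and ρ̃ = ∏_{j=1}^N (1 − t^{j−1} t_3 t_4 q^{−1})(1 − t^{1−j} B t_3^{−1})(1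 − t^{1−j} B t_4^{−1}). -/

import Mathlib

open Complex

/-- The infinite `q`-Pochhammer symbol `(a;q)_∞ = ∏_{n≥0} (1 - a qⁿ)`. -/
noncomputable def qPoch (a p : ℂ) : ℂ := ∏' n : ℕ, (1 - a * p ^ n)

/-- The double sine function
`S(u;ω1,ω2) = (e^{2πi u/ω2}; q)_∞ / (e^{2πi u/ω1} q̃; q̃)_∞`. -/
noncomputable def dsine (ω1 ω2 u : ℂ) : ℂ :=
  qPoch (exp (2*(Real.pi:ℂ)*I*u/ω2)) (exp (2*(Real.pi:ℂ)*I*ω1/ω2)) /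
  qPoch (exp (2*(Real.pi:ℂ)*I*u/ω1) * exp (-(2*(Real.pi:ℂ)*I*ω2)/ω1))
    (exp (-(2*(Real.pi:ℂ)*I*ω2)/ω1))

/-- The evaluation `𝒩(g₀,…,g₄)` of the hyperbolic Nassrallah–Rahman integral, with
`ℬ = (2N-2)g + Σ_n g_n`. -/
noncomputable def NRval (N : ℕ) (ω1 ω2 g : ℂ) (gv : Fin 5 → ℂ) : ℂ :=
  (-2)^N * (N.factorial : ℂ) *
    qPoch (exp (-(2*(Real.pi:ℂ)*I*ω2)/ω1)) (exp (-(2*(Real.pi:ℂ)*I*ω2)/ω1)) ^ N /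
    qPoch (exp (2*(Real.pi:ℂ)*I*ω1/ω2)) (exp (2*(Real.pi:ℂ)*I*ω1/ω2)) ^ N *
  ∏ j ∈ Finset.range N,
    (dsine ω1 ω2 g / dsine ω1 ω2 (((j:ℂ) + 1) * g)) *
    ((∏ n : Fin 5, dsine ω1 ω2 (-(j:ℂ)*g + ((2*(N:ℂ) - 2)*g + ∑ k, gv k) - gv n)) /
     ∏ n : Fin 5, ∏ m : Fin 5, if n < m then dsine ω1 ω2 ((j:ℂ)*g + gv n + gv m) else 1)

/-- All double sine values involved in `𝒩` are (defined and) nonzero. -/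
def NRvalDef (N : ℕ) (ω1 ω2 g : ℂ) (gv : Fin 5 → ℂ) : Prop :=
  dsine ω1 ω2 g ≠ 0 ∧
  ∀ j ∈ Finset.range N,
    dsine ω1 ω2 (((j:ℂ) + 1) * g) ≠ 0 ∧
    (∀ n : Fin 5, dsine ω1 ω2 (-(j:ℂ)*g + ((2*(N:ℂ) - 2)*g + ∑ k, gv k) - gv n) ≠ 0) ∧
    (∀ n m : Fin 5, n < m → dsine ω1 ω2 ((j:ℂ)*g + gv n + gv m) ≠ 0)


/-!
The double sine satisfies `S(u) = (1 - e^{2πi u/ω2}) S(u + ω1)`: the `q`-Pochhammer symbol in the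
numerator obeys `(a;q)_∞ = (1 - a) (aq;q)_∞`, while `e^{2πi u/ω1}` is `ω1`-periodic.
Under the shift of the parameters, `ℬ` moves by `ω1/2`, so every argument of `S` in a factor of `𝒩`
is either unchanged or moves by `±ω1`: `ℬ - g_n` moves by `+ω1` for `n = 3, 4`, `g_n + g_m` by
`+ω1` for `n, m ≤ 2` and by `-ω1` for `{n, m} = {3, 4}`. Hence the quotient of the `j`-th factors
is a product of six factors `1 - e^{2πi(⋯)/ω2}`, which are those of `ρ̃/ρ`.
-/

local notation "𝐞(" u "; " ω ")" => exp (2 * (Real.pi : ℂ) * I * u / ω)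

lemma summable_norm_mul_pow (a : ℂ) {p : ℂ} (hp : ‖p‖ < 1) :
    Summable fun n : ℕ => ‖a * p ^ n‖ := by
  simpa only [norm_mul, norm_pow] using
    (summable_geometric_of_lt_one (norm_nonneg p) hp).mul_left ‖a‖

lemma multipliable_one_sub_mul_pow (a : ℂ) {p : ℂ} (hp : ‖p‖ < 1) :
    Multipliable fun n : ℕ => 1 - a * p ^ n := by
  simpa only [sub_eq_add_neg] using
    Complex.multipliable_one_add_of_summable (summable_norm_mul_pow a hp).of_norm.neg

lemma qPoch_eq_one_sub_mul_qPoch_mul (a : ℂ) {p : ℂ} (hp : ‖p‖ < 1) :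
    qPoch a p = (1 - a) * qPoch (a * p) p := by
  have hshift : Multipliable fun n : ℕ => 1 - a * p ^ (n + 1) := by
    simpa only [pow_succ', mul_assoc] using multipliable_one_sub_mul_pow (a * p) hp
  unfold qPoch
  rw [tprod_eq_zero_mul' (f := fun n : ℕ => 1 - a * p ^ n) hshift, pow_zero, mul_one]
  simp only [pow_succ', mul_assoc]

lemma qPoch_self_ne_zero {p : ℂ} (hp : ‖p‖ < 1) : qPoch p p ≠ 0 := by
  have hfactor (n : ℕ) : 1 + -(p * p ^ n) ≠ 0 := by
    rw [← sub_eq_add_neg, sub_ne_zero, ← pow_succ']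
    intro h
    have := pow_lt_one₀ (norm_nonneg p) hp n.succ_ne_zero
    rw [← norm_pow, ← h, norm_one] at this
    exact this.false
  simpa only [qPoch, sub_eq_add_neg] using tprod_one_add_ne_zero_of_summable hfactor
    (by simpa only [norm_neg] using summable_norm_mul_pow p hp)

lemma norm_exp_two_pi_I_mul_div_lt_one {a b : ℂ} (h : 0 < (a / b).im) :
    ‖exp (2 * (Real.pi : ℂ) * I * a / b)‖ < 1 := by
  simpa only [mul_div_assoc] using UpperHalfPlane.norm_exp_two_pi_I_lt_one ⟨a / b, h⟩

lemma norm_exp_neg_two_pi_I_mul_div_lt_one {a b : ℂ} (h : 0 < (a / b).im) :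
    ‖exp (-(2 * (Real.pi : ℂ) * I * b) / a)‖ < 1 := by
  have him : 0 < (b / -a).im := by
    simpa only [inv_neg, inv_div, div_neg] using UpperHalfPlane.im_inv_neg_coe_pos ⟨a / b, h⟩
  simpa only [div_neg, neg_div] using norm_exp_two_pi_I_mul_div_lt_one him

lemma dsine_eq_one_sub_mul_dsine_add {ω1 ω2 : ℂ} (hω1 : ω1 ≠ 0) (hq : ‖𝐞(ω1; ω2)‖ < 1) (u : ℂ) :
    dsine ω1 ω2 u = (1 - 𝐞(u; ω2)) * dsine ω1 ω2 (u + ω1) := by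
  have hq_mul : 𝐞(u + ω1; ω2) = 𝐞(u; ω2) * 𝐞(ω1; ω2) := by
    rw [← exp_add]; ring_nf
  have hperiodic : 𝐞(u + ω1; ω1) = 𝐞(u; ω1) := by
    rw [mul_add, add_div, mul_div_cancel_right₀ _ hω1, exp_add, exp_two_pi_mul_I, mul_one]
  rw [dsine, dsine, hq_mul, hperiodic, qPoch_eq_one_sub_mul_qPoch_mul _ hq, mul_div_assoc]

lemma exp_two_pi_I_sub_div (x y ω : ℂ) : 𝐞(x - y; ω) = 𝐞(x; ω) / 𝐞(y; ω) := by
  rw [← exp_sub]; ring_nf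

lemma exp_two_pi_I_natCast_mul_add_add_div (j : ℕ) (a b c ω : ℂ) :
    𝐞((j:ℂ) * a + b + c; ω) = 𝐞(a; ω) ^ j * 𝐞(b; ω) * 𝐞(c; ω) := by
  rw [← exp_nat_mul, ← exp_add, ← exp_add]; ring_nf

lemma exp_two_pi_I_neg_natCast_mul_add_div (j : ℕ) (a b ω : ℂ) :
    𝐞(-(j:ℂ) * a + b; ω) = 𝐞(a; ω) ^ (-(j:ℤ)) * 𝐞(b; ω) := by
  rw [← exp_int_mul, ← exp_add]; push_cast; ring_nf

section ShiftRatios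

variable {ω1 ω2 u v : ℂ}

lemma dsine_div_dsine_of_eq (hu : dsine ω1 ω2 u ≠ 0) (h : v = u) :
    dsine ω1 ω2 u / dsine ω1 ω2 v = 1 := by
  rw [h, div_self hu]

lemma dsine_div_dsine_of_eq_add (hω1 : ω1 ≠ 0) (hq : ‖𝐞(ω1; ω2)‖ < 1)
    (hu : dsine ω1 ω2 u ≠ 0) (h : v = u + ω1) :
    dsine ω1 ω2 u / dsine ω1 ω2 v = 1 - 𝐞(u; ω2) := by
  rw [h, dsine_eq_one_sub_mul_dsine_add hω1 hq u] at *
  exact mul_div_cancel_right₀ _ (right_ne_zero_of_mul hu)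

lemma dsine_div_dsine_of_eq_sub (hω1 : ω1 ≠ 0) (hq : ‖𝐞(ω1; ω2)‖ < 1)
    (hu : dsine ω1 ω2 u ≠ 0) (h : v = u - ω1) :
    dsine ω1 ω2 u / dsine ω1 ω2 v = (1 - 𝐞(u - ω1; ω2))⁻¹ := by
  -- also when `1 - 𝐞(u - ω1; ω2) = 0`, where `S v = 0` and both sides are junk `0`
  have hshift := dsine_eq_one_sub_mul_dsine_add hω1 hq (u - ω1)
  rw [sub_add_cancel] at hshift
  rw [h, hshift, div_mul_cancel_right₀ hu]

end ShiftRatios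

noncomputable def NRconst (N : ℕ) (ω1 ω2 : ℂ) : ℂ :=
  (-2)^N * (N.factorial : ℂ) *
    qPoch (exp (-(2*(Real.pi:ℂ)*I*ω2)/ω1)) (exp (-(2*(Real.pi:ℂ)*I*ω2)/ω1)) ^ N /
    qPoch (exp (2*(Real.pi:ℂ)*I*ω1/ω2)) (exp (2*(Real.pi:ℂ)*I*ω1/ω2)) ^ N

noncomputable def NRfactor (N : ℕ) (ω1 ω2 g : ℂ) (gv : Fin 5 → ℂ) (j : ℕ) : ℂ :=
  (dsine ω1 ω2 g / dsine ω1 ω2 (((j:ℂ) + 1) * g)) *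
    ((∏ n : Fin 5, dsine ω1 ω2 (-(j:ℂ)*g + ((2*(N:ℂ) - 2)*g + ∑ k, gv k) - gv n)) /
     ∏ n : Fin 5, ∏ m : Fin 5, if n < m then dsine ω1 ω2 ((j:ℂ)*g + gv n + gv m) else 1)

lemma NRval_eq_NRconst_mul_prod (N : ℕ) (ω1 ω2 g : ℂ) (gv : Fin 5 → ℂ) :
    NRval N ω1 ω2 g gv = NRconst N ω1 ω2 * ∏ j ∈ Finset.range N, NRfactor N ω1 ω2 g gv j :=
  rfl

lemma NRconst_ne_zero (N : ℕ) {ω1 ω2 : ℂ} (h : 0 < (ω1 / ω2).im) : NRconst N ω1 ω2 ≠ 0 := by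
  simp [NRconst, N.factorial_ne_zero, qPoch_self_ne_zero (norm_exp_two_pi_I_mul_div_lt_one h),
    qPoch_self_ne_zero (norm_exp_neg_two_pi_I_mul_div_lt_one h)]

noncomputable def NRshift (ω1 : ℂ) (gv : Fin 5 → ℂ) : Fin 5 → ℂ :=
  fun n => gv n + (if (n:ℕ) < 3 then (1:ℂ) else -1) * ω1 / 2

lemma prod_prod_ite_div_prod_prod_ite {ι M : Type*} [Fintype ι] [DivisionCommMonoid M]
    (p : ι → ι → Prop) [DecidableRel p] (f f' : ι → ι → M) :
    (∏ n, ∏ m, if p n m then f n m else 1) / (∏ n, ∏ m, if p n m then f' n m else 1) =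
      ∏ n, ∏ m, if p n m then f n m / f' n m else 1 := by
  simp only [← Finset.prod_div_distrib]
  congr! 2 with n - m -
  split_ifs <;> simp

lemma NRfactor_div_NRfactor_shift {N : ℕ} {ω1 ω2 g : ℂ} {gv : Fin 5 → ℂ} {j : ℕ}
    (hω1 : ω1 ≠ 0) (hq : ‖𝐞(ω1; ω2)‖ < 1) (hdef : NRvalDef N ω1 ω2 g gv)
    (hj : j ∈ Finset.range N) :
    NRfactor N ω1 ω2 g gv j / NRfactor N ω1 ω2 g (NRshift ω1 gv) j =
      (1 - 𝐞(g; ω2) ^ j * 𝐞(gv 3; ω2) * 𝐞(gv 4; ω2) / 𝐞(ω1; ω2)) *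
        (1 - 𝐞(g; ω2) ^ (-(j:ℤ)) * 𝐞((2*(N:ℂ) - 2)*g + ∑ k, gv k; ω2) / 𝐞(gv 3; ω2)) *
        (1 - 𝐞(g; ω2) ^ (-(j:ℤ)) * 𝐞((2*(N:ℂ) - 2)*g + ∑ k, gv k; ω2) / 𝐞(gv 4; ω2)) /
      ((1 - 𝐞(g; ω2) ^ j * 𝐞(gv 0; ω2) * 𝐞(gv 1; ω2)) *
        (1 - 𝐞(g; ω2) ^ j * 𝐞(gv 0; ω2) * 𝐞(gv 2; ω2)) *
        (1 - 𝐞(g; ω2) ^ j * 𝐞(gv 1; ω2) * 𝐞(gv 2; ω2))) := by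
  obtain ⟨hg, hrest⟩ := hdef
  obtain ⟨hT, hA, hD⟩ := hrest j hj
  unfold NRfactor
  rw [mul_div_mul_left _ _ (div_ne_zero hg hT), div_div_div_comm, ← Finset.prod_div_distrib,
    prod_prod_ite_div_prod_prod_ite]
  simp +decide only [Fin.prod_univ_five, if_true, if_false, one_mul, mul_one]
  rw [dsine_div_dsine_of_eq (hA 0), dsine_div_dsine_of_eq (hA 1), dsine_div_dsine_of_eq (hA 2),
    dsine_div_dsine_of_eq_add hω1 hq (hA 3), dsine_div_dsine_of_eq_add hω1 hq (hA 4),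
    dsine_div_dsine_of_eq_add hω1 hq (hD 0 1 (by decide)),
    dsine_div_dsine_of_eq_add hω1 hq (hD 0 2 (by decide)),
    dsine_div_dsine_of_eq_add hω1 hq (hD 1 2 (by decide)),
    dsine_div_dsine_of_eq_sub hω1 hq (hD 3 4 (by decide)),
    dsine_div_dsine_of_eq (hD 0 3 (by decide)), dsine_div_dsine_of_eq (hD 0 4 (by decide)),
    dsine_div_dsine_of_eq (hD 1 3 (by decide)), dsine_div_dsine_of_eq (hD 1 4 (by decide)),
    dsine_div_dsine_of_eq (hD 2 3 (by decide)), dsine_div_dsine_of_eq (hD 2 4 (by decide))]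
  · simp only [exp_two_pi_I_sub_div, exp_two_pi_I_natCast_mul_add_add_div,
      exp_two_pi_I_neg_natCast_mul_add_div]
    simp only [div_eq_mul_inv, mul_inv, inv_inv]
    ring
  -- each shifted argument is the original one moved by `0` or `±ω1`
  all_goals simp [NRshift, Fin.sum_univ_five]; ring

theorem stmt15_general (N : ℕ)
    (ω1 ω2 : ℂ)
    (h12 : 0 < (ω1/ω2).im)
    (g : ℂ) (gv : Fin 5 → ℂ)
    (hdef : NRvalDef N ω1 ω2 g gv) :
    NRval N ω1 ω2 g gv /
        NRval N ω1 ω2 g (fun n => gv n + (if (n:ℕ) < 3 then (1:ℂ) else -1) * ω1 / 2)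
      = (∏ j ∈ Finset.range N,
          (1 - exp (2*(Real.pi:ℂ)*I*g/ω2) ^ j * exp (2*(Real.pi:ℂ)*I*(gv 3)/ω2) *
              exp (2*(Real.pi:ℂ)*I*(gv 4)/ω2) / exp (2*(Real.pi:ℂ)*I*ω1/ω2)) *
          (1 - exp (2*(Real.pi:ℂ)*I*g/ω2) ^ (-(j:ℤ)) *
              exp (2*(Real.pi:ℂ)*I*((2*(N:ℂ) - 2)*g + ∑ k, gv k)/ω2) /
              exp (2*(Real.pi:ℂ)*I*(gv 3)/ω2)) *
          (1 - exp (2*(Real.pi:ℂ)*I*g/ω2) ^ (-(j:ℤ)) *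
              exp (2*(Real.pi:ℂ)*I*((2*(N:ℂ) - 2)*g + ∑ k, gv k)/ω2) /
              exp (2*(Real.pi:ℂ)*I*(gv 4)/ω2))) /
        ∏ j ∈ Finset.range N,
          (1 - exp (2*(Real.pi:ℂ)*I*g/ω2) ^ j * exp (2*(Real.pi:ℂ)*I*(gv 0)/ω2) *
              exp (2*(Real.pi:ℂ)*I*(gv 1)/ω2)) *
          (1 - exp (2*(Real.pi:ℂ)*I*g/ω2) ^ j * exp (2*(Real.pi:ℂ)*I*(gv 0)/ω2) *
              exp (2*(Real.pi:ℂ)*I*(gv 2)/ω2)) *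
          (1 - exp (2*(Real.pi:ℂ)*I*g/ω2) ^ j * exp (2*(Real.pi:ℂ)*I*(gv 1)/ω2) *
              exp (2*(Real.pi:ℂ)*I*(gv 2)/ω2)) := by
  have hω1 : ω1 ≠ 0 := by
    rintro rfl
    simp at h12
  rw [NRval_eq_NRconst_mul_prod, NRval_eq_NRconst_mul_prod,
    mul_div_mul_left _ _ (NRconst_ne_zero N h12), ← Finset.prod_div_distrib,
    ← Finset.prod_div_distrib]
  exact Finset.prod_congr rfl fun j hj =>
    NRfactor_div_NRfactor_shift hω1 (norm_exp_two_pi_I_mul_div_lt_one h12) hdef hj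

/-- Behaviour of the integral evaluation `𝒩` under the parameter shift
`g₀,g₁,g₂ → g₀+ω1/2, g₁+ω1/2, g₂+ω1/2`, `g₃,g₄ → g₃−ω1/2, g₄−ω1/2`:
`𝒩(g)/𝒩(g shifted) = ρ̃/ρ`. -/
theorem stmt15 (N : ℕ) (hN : 1 ≤ N)
    (ω1 ω2 : ℂ) (hω1 : ω1 ≠ 0) (hω2 : ω2 ≠ 0)
    (h12 : 0 < (ω1/ω2).im) (h12' : 0 < (ω1/ω2).re)
    (g : ℂ) (gv : Fin 5 → ℂ)
    (hdef : NRvalDef N ω1 ω2 g gv)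
    (hdef' : NRvalDef N ω1 ω2 g
      (fun n => gv n + (if (n:ℕ) < 3 then (1:ℂ) else -1) * ω1 / 2)) :
    NRval N ω1 ω2 g gv /
        NRval N ω1 ω2 g (fun n => gv n + (if (n:ℕ) < 3 then (1:ℂ) else -1) * ω1 / 2)
      = (∏ j ∈ Finset.range N,
          (1 - exp (2*(Real.pi:ℂ)*I*g/ω2) ^ j * exp (2*(Real.pi:ℂ)*I*(gv 3)/ω2) *
              exp (2*(Real.pi:ℂ)*I*(gv 4)/ω2) / exp (2*(Real.pi:ℂ)*I*ω1/ω2)) *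
          (1 - exp (2*(Real.pi:ℂ)*I*g/ω2) ^ (-(j:ℤ)) *
              exp (2*(Real.pi:ℂ)*I*((2*(N:ℂ) - 2)*g + ∑ k, gv k)/ω2) /
              exp (2*(Real.pi:ℂ)*I*(gv 3)/ω2)) *
          (1 - exp (2*(Real.pi:ℂ)*I*g/ω2) ^ (-(j:ℤ)) *
              exp (2*(Real.pi:ℂ)*I*((2*(N:ℂ) - 2)*g + ∑ k, gv k)/ω2) /
              exp (2*(Real.pi:ℂ)*I*(gv 4)/ω2))) /
        ∏ j ∈ Finset.range N,
          (1 - exp (2*(Real.pi:ℂ)*I*g/ω2) ^ j * exp (2*(Real.pi:ℂ)*I*(gv 0)/ω2) *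
              exp (2*(Real.pi:ℂ)*I*(gv 1)/ω2)) *
          (1 - exp (2*(Real.pi:ℂ)*I*g/ω2) ^ j * exp (2*(Real.pi:ℂ)*I*(gv 0)/ω2) *
              exp (2*(Real.pi:ℂ)*I*(gv 2)/ω2)) *
          (1 - exp (2*(Real.pi:ℂ)*I*g/ω2) ^ j * exp (2*(Real.pi:ℂ)*I*(gv 1)/ω2) *
              exp (2*(Real.pi:ℂ)*I*(gv 2)/ω2)) :=
  stmt15_general N ω1 ω2 h12 g gv hdef
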